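/- arXiv:1506.04804 — 3 statements merged into one kernel-verified Lean document; each statement's English description precedes it below -/
import Mathlib

section
/- For every natural number k, the (k+1)×(k+1) real matrix V with entries V_{a,b} = C(a+b, a)/(a+b+1)! (for 0 ≤ a, b ≤ k) is symmetric and positive definite. -/
/-!
Since `∫₀¹ (t^a/a!) (t^b/b!) dt = C(a+b, a)/(a+b+1)!`, the matrix `V` is the Gram matrix of the
monomials `t^a/a!` in `L²[0, 1]`. Hence `xᵀ V x = ∫₀¹ p(t)² dt` for the polynomial
`p = ∑ₐ xₐ tᵃ/a!`, which is nonzero when `x ≠ 0`, and a nonzero polynomial vanishes only at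
finitely many points of `[0, 1]`.
-/

open scoped Matrix

/-- The rescaled variance–covariance matrix of the generalized Kolmogorov diffusion:
`V a b = C(a+b, a) / (a+b+1)!`. -/
noncomputable def kolV (k : ℕ) : Matrix (Fin (k + 1)) (Fin (k + 1)) ℝ :=
  fun a b => (Nat.choose ((a : ℕ) + (b : ℕ)) (a : ℕ) : ℝ) /
    (Nat.factorial ((a : ℕ) + (b : ℕ) + 1) : ℝ)

open Polynomial intervalIntegral
open scoped Nat

theorem Polynomial.eval_ofFn {R : Type*} [CommSemiring R] [DecidableEq R] {n : ℕ}
    (v : Fin n → R) (t : R) : (ofFn n v).eval t = ∑ i, v i * t ^ (i : ℕ) := by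
  simp only [ofFn_eq_sum_monomial, eval_finsetSum, eval_monomial]

theorem integral_eval_sq_pos {p : ℝ[X]} (hp : p ≠ 0) {a b : ℝ} (hab : a < b) :
    0 < ∫ t in a..b, p.eval t ^ 2 := by
  obtain ⟨c, hc, hpc⟩ : ∃ c ∈ Set.Icc a b, ¬ p.IsRoot c :=
    ((Set.Icc_infinite hab).sdiff (finite_setOfPred_isRoot hp)).nonempty
  exact integral_pos hab (p.continuous.pow 2).continuousOn (fun t _ ↦ sq_nonneg _)
    ⟨c, hc, sq_pos_of_ne_zero hpc⟩

theorem dotProduct_mulVec_integral_mul {ι : Type*} [Fintype ι] {f : ι → ℝ → ℝ}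
    (hf : ∀ i, Continuous (f i)) (a b : ℝ) (x : ι → ℝ) :
    x ⬝ᵥ (Matrix.of fun i j ↦ ∫ t in a..b, f i t * f j t) *ᵥ x
      = ∫ t in a..b, (∑ i, x i * f i t) ^ 2 := by
  have hcont : ∀ i j, Continuous fun t ↦ x i * f i t * (x j * f j t) := by fun_prop
  simp only [dotProduct, Matrix.mulVec, Matrix.of_apply, sq, Finset.sum_mul_sum]
  rw [integral_finsetSum fun i _ ↦
    (continuous_finsetSum _ fun j _ ↦ hcont i j).intervalIntegrable a b]
  refine Finset.sum_congr rfl fun i _ ↦ ?_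
  rw [integral_finsetSum fun j _ ↦ (hcont i j).intervalIntegrable a b, Finset.mul_sum]
  refine Finset.sum_congr rfl fun j _ ↦ ?_
  rw [← integral_mul_const, ← integral_const_mul]
  congr 1 with t
  ring

theorem integral_pow_div_factorial_mul (m n : ℕ) :
    ∫ t in (0 : ℝ)..1, t ^ m / m ! * (t ^ n / n !) = ((m + n).choose m : ℝ) / (m + n + 1)! := by
  simp_rw [div_mul_div_comm, ← pow_add, integral_div, integral_pow,
    Nat.cast_choose ℝ (Nat.le_add_right m n), Nat.add_sub_cancel_left, Nat.factorial_succ]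
  push_cast
  field_simp
  ring

theorem kolV_eq_integral (k : ℕ) :
    kolV k = Matrix.of fun a b : Fin (k + 1) ↦
      ∫ t in (0 : ℝ)..1, t ^ (a : ℕ) / (a : ℕ)! * (t ^ (b : ℕ) / (b : ℕ)!) := by
  ext a b
  exact (integral_pow_div_factorial_mul a b).symm

theorem kolV_isSymm (k : ℕ) : (kolV k).IsSymm :=
  Matrix.IsSymm.ext fun a b ↦ by simp only [kolV_eq_integral, Matrix.of_apply, mul_comm]

/-- For every natural number `k`, the `(k+1)×(k+1)` real matrix `V` with entries
`V_{a,b} = C(a+b, a)/(a+b+1)!` is symmetric and positive definite. -/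
theorem kolV_isSymm_posDef (k : ℕ) : (kolV k).IsSymm ∧ (kolV k).PosDef := by
  refine ⟨kolV_isSymm k,
    .of_dotProduct_mulVec_pos (Matrix.isHermitian_iff_isSymm.2 (kolV_isSymm k)) fun x hx ↦ ?_⟩
  classical
  let p : ℝ[X] := ofFn (k + 1) fun a ↦ x a / (a : ℕ)!
  have hp : p ≠ 0 := by
    refine (map_ne_zero_iff _ (injective_ofFn _)).2 fun hv ↦ hx (funext fun a ↦ ?_)
    simpa [Nat.factorial_ne_zero] using congrFun hv a
  have hp_eval (t : ℝ) : p.eval t = ∑ a : Fin (k + 1), x a * (t ^ (a : ℕ) / (a : ℕ)!) := by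
    simp only [p, eval_ofFn, mul_comm_div]
  rw [star_trivial, kolV_eq_integral, dotProduct_mulVec_integral_mul (by fun_prop)]
  simpa only [hp_eval] using integral_eval_sq_pos hp zero_lt_one
end

section
/- For every a > 0 and every t ≥ 1, (6^{1/3} a e^{−2a³/9}/Γ(1/3)) · t^{−1/3} ≤ ∫_t^∞ (2^{1/3}/(3^{2/3} Γ(1/3))) · (a/u^{4/3}) · exp(−2a³/(9u)) du ≤ (6^{1/3} a/Γ(1/3)) · t^{−1/3}. -/
open Real MeasureTheory Set

/-! On `[t, ∞)` with `t ≥ 1` the factor `exp (-2a³/(9u))` lies between `exp (-2a³/9)` and `1`, so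
the tail is squeezed between multiples of `∫_t^∞ u^{-4/3} du = 3 t^{-1/3}`; the prefactors agree
because `3 · 2^{1/3} / 3^{2/3} = 6^{1/3}`. -/

section RpowMulExpNegDiv

variable {s t b : ℝ}

lemma exp_neg_div_le_one (hb : 0 ≤ b) {u : ℝ} (hu : 0 < u) : exp (-b / u) ≤ 1 :=
  exp_le_one_iff.2 (div_nonpos_of_nonpos_of_nonneg (neg_nonpos.2 hb) hu.le)

lemma exp_neg_div_le_exp_neg_div (hb : 0 ≤ b) (ht : 0 < t) {u : ℝ} (htu : t ≤ u) :
    exp (-b / t) ≤ exp (-b / u) := by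
  rw [exp_le_exp, neg_div, neg_div, neg_le_neg_iff]
  exact div_le_div_of_nonneg_left hb ht htu

lemma integrableOn_Ioi_rpow_mul_exp_neg_div (hs : s < -1) (ht : 0 < t) (hb : 0 ≤ b) :
    IntegrableOn (fun u ↦ u ^ s * exp (-b / u)) (Ioi t) := by
  refine (integrableOn_Ioi_rpow_of_lt hs ht).mono' (by fun_prop) ?_
  filter_upwards [ae_restrict_mem measurableSet_Ioi] with u (hu : t < u)
  have hu0 : 0 < u := ht.trans hu
  rw [norm_of_nonneg (by positivity)]
  exact mul_le_of_le_one_right (rpow_nonneg hu0.le s) (exp_neg_div_le_one hb hu0)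

lemma integral_Ioi_rpow_mul_exp_neg_div_le (hs : s < -1) (ht : 0 < t) (hb : 0 ≤ b) :
    ∫ u in Ioi t, u ^ s * exp (-b / u) ≤ -t ^ (s + 1) / (s + 1) := by
  rw [← integral_Ioi_rpow_of_lt hs ht]
  refine setIntegral_mono_on (integrableOn_Ioi_rpow_mul_exp_neg_div hs ht hb)
    (integrableOn_Ioi_rpow_of_lt hs ht) measurableSet_Ioi fun u (hu : t < u) ↦ ?_
  have hu0 : 0 < u := ht.trans hu
  exact mul_le_of_le_one_right (rpow_nonneg hu0.le s) (exp_neg_div_le_one hb hu0)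

lemma exp_neg_div_mul_le_integral_Ioi_rpow_mul_exp_neg_div (hs : s < -1) (ht : 0 < t)
    (hb : 0 ≤ b) :
    exp (-b / t) * (-t ^ (s + 1) / (s + 1)) ≤ ∫ u in Ioi t, u ^ s * exp (-b / u) := by
  rw [← integral_Ioi_rpow_of_lt hs ht, ← integral_const_mul]
  refine setIntegral_mono_on ((integrableOn_Ioi_rpow_of_lt hs ht).const_mul _)
    (integrableOn_Ioi_rpow_mul_exp_neg_div hs ht hb) measurableSet_Ioi fun u (hu : t < u) ↦ ?_
  rw [mul_comm]
  exact mul_le_mul_of_nonneg_left (exp_neg_div_le_exp_neg_div hb ht hu.le)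
    (rpow_nonneg (ht.trans hu).le s)

end RpowMulExpNegDiv

lemma three_mul_two_rpow_third_div_three_rpow_two_thirds :
    (3:ℝ) * (2 ^ ((1:ℝ) / 3) / 3 ^ ((2:ℝ) / 3)) = 6 ^ ((1:ℝ) / 3) := by
  have h3 : (3:ℝ) ^ ((1:ℝ) / 3) * 3 ^ ((2:ℝ) / 3) = 3 := by
    rw [← rpow_add three_pos]; norm_num
  rw [show (6:ℝ) = 2 * 3 by norm_num, mul_rpow two_pos.le three_pos.le]
  field_simp
  linear_combination -h3

/-- Tail bounds for the Kearney–Majumdar area density: for `a > 0` and `t ≥ 1`,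
`(6^{1/3} a e^{−2a³/9}/Γ(1/3)) t^{−1/3} ≤ ∫_t^∞ (2^{1/3}/(3^{2/3} Γ(1/3))) (a/u^{4/3}) e^{−2a³/(9u)} du
  ≤ (6^{1/3} a/Γ(1/3)) t^{−1/3}`. -/
theorem kearney_majumdar_tail (a : ℝ) (ha : 0 < a) (t : ℝ) (ht : 1 ≤ t) :
    (6 ^ ((1:ℝ) / 3) * a * Real.exp (-(2 * a ^ 3) / 9) / Real.Gamma (1 / 3)) *
        t ^ (-(1:ℝ) / 3) ≤
      (∫ u in Set.Ioi t,
        (2 ^ ((1:ℝ) / 3) / (3 ^ ((2:ℝ) / 3) * Real.Gamma (1 / 3))) *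
          (a / u ^ ((4:ℝ) / 3)) * Real.exp (-(2 * a ^ 3) / (9 * u))) ∧
    (∫ u in Set.Ioi t,
        (2 ^ ((1:ℝ) / 3) / (3 ^ ((2:ℝ) / 3) * Real.Gamma (1 / 3))) *
          (a / u ^ ((4:ℝ) / 3)) * Real.exp (-(2 * a ^ 3) / (9 * u))) ≤
      (6 ^ ((1:ℝ) / 3) * a / Real.Gamma (1 / 3)) * t ^ (-(1:ℝ) / 3) := by
  have ht0 : 0 < t := one_pos.trans_le ht
  set b := 2 * a ^ 3 / 9
  have hb : 0 ≤ b := by positivity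
  set I := ∫ u in Ioi t, u ^ (-(4:ℝ) / 3) * exp (-b / u)
  have hs : -(4:ℝ) / 3 < -1 := by norm_num
  have hs1 : -(4:ℝ) / 3 + 1 = -1 / 3 := by norm_num
  have hupper := integral_Ioi_rpow_mul_exp_neg_div_le hs ht0 hb
  have hlower := exp_neg_div_mul_le_integral_Ioi_rpow_mul_exp_neg_div hs ht0 hb
  rw [hs1] at hupper hlower
  have hexp : exp (-b) ≤ exp (-b / t) := by simpa using exp_neg_div_le_exp_neg_div hb one_pos ht
  have hintegral : ∫ u in Ioi t, 2 ^ ((1:ℝ) / 3) / (3 ^ ((2:ℝ) / 3) * Gamma (1 / 3)) *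
      (a / u ^ ((4:ℝ) / 3)) * exp (-(2 * a ^ 3) / (9 * u)) =
      6 ^ ((1:ℝ) / 3) * a / Gamma (1 / 3) / 3 * I := by
    rw [← integral_const_mul]
    refine setIntegral_congr_fun measurableSet_Ioi fun u (hu : t < u) ↦ ?_
    have hu0 : 0 < u := ht0.trans hu
    rw [← three_mul_two_rpow_third_div_three_rpow_two_thirds,
      show -(2 * a ^ 3) / (9 * u) = -b / u by ring, show -(4:ℝ) / 3 = -(4 / 3) by ring,
      rpow_neg hu0.le]
    field_simp
  have h3T : -t ^ (-(1:ℝ) / 3) / (-1 / 3) = 3 * t ^ (-(1:ℝ) / 3) := by ring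
  rw [h3T] at hupper hlower
  rw [hintegral, show -(2 * a ^ 3) / 9 = -b by ring]
  constructor
  · calc 6 ^ ((1:ℝ) / 3) * a * exp (-b) / Gamma (1 / 3) * t ^ (-(1:ℝ) / 3)
        = 6 ^ ((1:ℝ) / 3) * a / Gamma (1 / 3) / 3 * (exp (-b) * (3 * t ^ (-(1:ℝ) / 3))) := by ring
      _ ≤ 6 ^ ((1:ℝ) / 3) * a / Gamma (1 / 3) / 3 * I := by
        gcongr
        exact (mul_le_mul_of_nonneg_right hexp (by positivity)).trans hlower
  · calc 6 ^ ((1:ℝ) / 3) * a / Gamma (1 / 3) / 3 * I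
        ≤ 6 ^ ((1:ℝ) / 3) * a / Gamma (1 / 3) / 3 * (3 * t ^ (-(1:ℝ) / 3)) := by gcongr
      _ = 6 ^ ((1:ℝ) / 3) * a / Gamma (1 / 3) * t ^ (-(1:ℝ) / 3) := by ring
end

section
/- Let (Y_k)_{k≥0} be nonnegative random variables on a probability space (not assumed independent) such that, for some constant C > 0, P(Y_k > s) ≤ C · (2^k s)^{−1/3} for every k ≥ 0 and every s > 0. Then for every t > 0, P( Σ_{k=0}^∞ Y_k > t ) ≤ C · (√2/(√2−1))^{1/3} · (1 − 2^{−1/6})^{−1} · t^{−1/3}. -/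
open MeasureTheory

/-!
Split the level as `t = ∑ₖ t (1 - r) rᵏ` with `0 < r < 1`. If `∑ₖ Yₖ > t`, some `Yₖ` exceeds its
share `t (1 - r) rᵏ`, so by the union bound
`P(∑ₖ Yₖ > t) ≤ ∑ₖ C (bᵏ t (1 - r) rᵏ)^(-p) = C (t (1 - r))^(-p) ∑ₖ ((b r)^(-p))ᵏ`,
a geometric series that converges once `b r > 1`. Here `b = 2`, `p = 1/3` and `r = 1/√2`.
-/

theorem measure_ofReal_lt_tsum_le_tsum_measure {Ω : Type*} [MeasurableSpace Ω] (μ : Measure Ω)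
    (Y : ℕ → Ω → ℝ) {s : ℕ → ℝ} {t : ℝ} (hs : ∀ k, 0 ≤ s k) (hst : HasSum s t) :
    μ {ω | ENNReal.ofReal t < ∑' k, ENNReal.ofReal (Y k ω)} ≤
      ∑' k, μ {ω | s k < Y k ω} := by
  have hsub : {ω | ENNReal.ofReal t < ∑' k, ENNReal.ofReal (Y k ω)} ⊆
      ⋃ k, {ω | s k < Y k ω} := by
    intro ω hω
    by_contra hnot
    simp only [Set.mem_iUnion, Set.mem_ofPred_eq, not_exists, not_lt] at hω hnot
    refine hω.not_ge ?_
    calc ∑' k, ENNReal.ofReal (Y k ω)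
        ≤ ∑' k, ENNReal.ofReal (s k) :=
          ENNReal.tsum_le_tsum fun k ↦ ENNReal.ofReal_le_ofReal (hnot k)
      _ = ENNReal.ofReal t := by rw [← ENNReal.ofReal_tsum_of_nonneg hs hst.summable, hst.tsum_eq]
  exact (measure_mono hsub).trans (measure_iUnion_le _)

theorem hasSum_mul_pow_rpow_neg {a ρ p : ℝ} (ha : 0 < a) (hρ : 1 < ρ) (hp : 0 < p) :
    HasSum (fun k : ℕ ↦ (a * ρ ^ k) ^ (-p)) (a ^ (-p) * (1 - ρ ^ (-p))⁻¹) := by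
  have hρ0 : 0 < ρ := zero_lt_one.trans hρ
  have hq0 : 0 ≤ ρ ^ (-p) := Real.rpow_nonneg hρ0.le _
  have hq1 : ρ ^ (-p) < 1 := Real.rpow_lt_one_of_one_lt_of_neg hρ (neg_neg_of_pos hp)
  have hterm : ∀ k : ℕ, (a * ρ ^ k) ^ (-p) = a ^ (-p) * (ρ ^ (-p)) ^ k := fun k ↦ by
    rw [Real.mul_rpow ha.le (by positivity), ← Real.rpow_natCast, ← Real.rpow_natCast,
      ← Real.rpow_mul hρ0.le, ← Real.rpow_mul hρ0.le, mul_comm (k : ℝ)]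
  simpa only [hterm] using (hasSum_geometric_of_lt_one hq0 hq1).mul_left (a ^ (-p))

theorem measure_ofReal_lt_tsum_le_of_tail_le {Ω : Type*} [MeasurableSpace Ω] (μ : Measure Ω)
    (Y : ℕ → Ω → ℝ) {C b p r : ℝ} (hp : 0 < p) (hr0 : 0 < r) (hr1 : r < 1) (hbr : 1 < b * r)
    (htail : ∀ (k : ℕ) (s : ℝ), 0 < s →
      μ {ω | s < Y k ω} ≤ ENNReal.ofReal (C * (b ^ k * s) ^ (-p)))
    {t : ℝ} (ht : 0 < t) :
    μ {ω | ENNReal.ofReal t < ∑' k, ENNReal.ofReal (Y k ω)} ≤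
      ENNReal.ofReal (C * ((t * (1 - r)) ^ (-p) * (1 - (b * r) ^ (-p))⁻¹)) := by
  have ha : 0 < t * (1 - r) := mul_pos ht (sub_pos.mpr hr1)
  have hshare : HasSum (fun k : ℕ ↦ t * (1 - r) * r ^ k) t := by
    have h := (hasSum_geometric_of_lt_one hr0.le hr1).mul_left (t * (1 - r))
    rwa [mul_assoc, mul_inv_cancel₀ (sub_pos.mpr hr1).ne', mul_one] at h
  have hscale : ∀ k : ℕ, b ^ k * (t * (1 - r) * r ^ k) = t * (1 - r) * (b * r) ^ k :=
    fun k ↦ by ring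
  have hbound := hasSum_mul_pow_rpow_neg ha hbr hp
  have hnonneg : ∀ k : ℕ, 0 ≤ (t * (1 - r) * (b * r) ^ k) ^ (-p) := fun k ↦
    Real.rpow_nonneg (by positivity) _
  calc μ {ω | ENNReal.ofReal t < ∑' k, ENNReal.ofReal (Y k ω)}
      ≤ ∑' k, μ {ω | t * (1 - r) * r ^ k < Y k ω} :=
        measure_ofReal_lt_tsum_le_tsum_measure μ Y (fun k ↦ by positivity) hshare
    _ ≤ ∑' k, ENNReal.ofReal C * ENNReal.ofReal ((t * (1 - r) * (b * r) ^ k) ^ (-p)) :=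
        ENNReal.tsum_le_tsum fun k ↦ by
          rw [← ENNReal.ofReal_mul' (hnonneg k), ← hscale]
          exact htail k _ (by positivity)
    _ = ENNReal.ofReal (C * ((t * (1 - r)) ^ (-p) * (1 - (b * r) ^ (-p))⁻¹)) := by
      rw [ENNReal.tsum_mul_left, ← ENNReal.ofReal_tsum_of_nonneg hnonneg hbound.summable,
        hbound.tsum_eq, ← ENNReal.ofReal_mul' (hbound.nonneg hnonneg)]

theorem tail_sum_bound_general {Ω : Type*} [MeasurableSpace Ω] (P : Measure Ω)
    (Y : ℕ → Ω → ℝ)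
    (C : ℝ)
    (htail : ∀ (k : ℕ) (s : ℝ), 0 < s →
      P {ω | s < Y k ω} ≤ ENNReal.ofReal (C * ((2 ^ k * s) ^ (-(1:ℝ) / 3))))
    (t : ℝ) (ht : 0 < t) :
    P {ω | ENNReal.ofReal t < ∑' k, ENNReal.ofReal (Y k ω)} ≤
      ENNReal.ofReal (C * (Real.sqrt 2 / (Real.sqrt 2 - 1)) ^ ((1:ℝ) / 3) *
        (1 - 2 ^ (-(1:ℝ) / 6))⁻¹ * t ^ (-(1:ℝ) / 3)) := by
  rw [neg_div, neg_div]
  simp only [neg_div] at htail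
  have hsqrt : 1 < √2 := Real.one_lt_sqrt_two
  have hsqrt0 : 0 < √2 := zero_lt_one.trans hsqrt
  have hratio : (2 : ℝ) * (√2)⁻¹ = √2 := by rw [← div_eq_mul_inv, Real.div_sqrt]
  have hshare : (1 - (√2)⁻¹)⁻¹ = √2 / (√2 - 1) := by field_simp
  have hgeom : √2 ^ (-(1 / 3 : ℝ)) = 2 ^ (-(1 / 6 : ℝ)) := by
    rw [Real.sqrt_eq_rpow, ← Real.rpow_mul zero_le_two]
    norm_num
  have hlevel : (t * (1 - (√2)⁻¹)) ^ (-(1 / 3 : ℝ)) =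
      (√2 / (√2 - 1)) ^ (1 / 3 : ℝ) * t ^ (-(1 / 3 : ℝ)) := by
    rw [Real.mul_rpow ht.le (by linarith [inv_lt_one_of_one_lt₀ hsqrt]),
      Real.rpow_neg_eq_inv_rpow (1 - _), ← hshare, mul_comm]
  have hbound := measure_ofReal_lt_tsum_le_of_tail_le P Y (by norm_num) (inv_pos.mpr hsqrt0)
    (inv_lt_one_of_one_lt₀ hsqrt) (by rwa [hratio]) htail ht
  rw [hratio, hgeom, hlevel] at hbound
  convert hbound using 2
  ring

/-- Boole's-inequality tail estimate: if nonnegative random variables `Y_k` satisfy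
`P(Y_k > s) ≤ C (2^k s)^{−1/3}` for all `k` and `s > 0`, then for every `t > 0`,
`P(Σ_k Y_k > t) ≤ C (√2/(√2−1))^{1/3} (1 − 2^{−1/6})⁻¹ t^{−1/3}`. -/
theorem tail_sum_bound {Ω : Type*} [MeasurableSpace Ω] (P : Measure Ω)
    [IsProbabilityMeasure P] (Y : ℕ → Ω → ℝ)
    (hYmeas : ∀ k, Measurable (Y k))
    (hYnonneg : ∀ k ω, 0 ≤ Y k ω)
    (C : ℝ) (hC : 0 < C)
    (htail : ∀ (k : ℕ) (s : ℝ), 0 < s →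
      P {ω | s < Y k ω} ≤ ENNReal.ofReal (C * ((2 ^ k * s) ^ (-(1:ℝ) / 3))))
    (t : ℝ) (ht : 0 < t) :
    P {ω | ENNReal.ofReal t < ∑' k, ENNReal.ofReal (Y k ω)} ≤
      ENNReal.ofReal (C * (Real.sqrt 2 / (Real.sqrt 2 - 1)) ^ ((1:ℝ) / 3) *
        (1 - 2 ^ (-(1:ℝ) / 6))⁻¹ * t ^ (-(1:ℝ) / 3)) :=
  tail_sum_bound_general P Y C htail t ht
end
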